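/- arXiv:2408.17444 — 2 statements merged into one kernel-verified Lean document; each statement's English description precedes it below -/
import Mathlib

section
/- Let m, m' ∈ ℕ, let A be a countably m-rectifiable metric space and let B be an m'-negligible metric space. Then the Cartesian product A × B, equipped with the product metric (the sup metric d((x,x'),(y,y')) = max(d_A(x,y), d_B(x',y')), which is bi-Lipschitz equivalent to every p-product metric for p ∈ [1,∞)), is (m+m')-negligible: its (m+m')-dimensional Hausdorff measure vanishes. -/
/-!
Lipschitz maps send `μH[d]`-null sets to null sets, so it suffices to show that `Q × B` is
`(m + m')`-null for every cube `Q ⊆ ℝ^m`. Cover `B` by sets `v n` of small positive radii `δ n`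
with `∑ δ n ^ m'` small and, for each `n`, cover `Q` by about `δ n ^ (-m)` sets of diameter
`δ n`. The products of these sets cover `Q × B` with diameters at most `δ n`, and their
`(m + m')`-sum is at most a constant times `∑ δ n ^ m'`.
-/

open Set MeasureTheory

/-- A subset `A` of a metric space is countably `m`-rectifiable iff it is the union of the
images of countably many Lipschitz maps, each defined on some subset of `ℝ^m`. -/
def CountablyRectifiable (m : ℕ) {X : Type*} [MetricSpace X] (A : Set X) : Prop :=
  ∃ (S : ℕ → Set (EuclideanSpace ℝ (Fin m))) (f : ∀ i, S i → X) (C : ℕ → NNReal),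
    (∀ i, LipschitzWith (C i) (f i)) ∧ A = ⋃ i, Set.range (f i)

/-- A metric space is `s`-negligible iff its `s`-dimensional Hausdorff measure
(w.r.t. the Borel σ-algebra) vanishes. -/
def IsNegligibleSpace (X : Type*) [MetricSpace X] (s : ℝ) : Prop :=
  letI := borel X
  letI : BorelSpace X := ⟨rfl⟩
  μH[s] (Set.univ : Set X) = 0

open Metric Filter Function
open scoped ENNReal NNReal

/-- The covering numbers of `S` at scales `δ ≤ 1` are `O(δ ^ (-d))`. -/
def CoveringNumberBounded {X : Type*} [PseudoEMetricSpace X] (d : ℝ) (S : Set X) : Prop :=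
  ∃ C : ℝ≥0, ∀ δ : ℝ≥0∞, 0 < δ → δ ≤ 1 → ∃ (ι : Type) (_ : Fintype ι) (c : ι → Set X),
    S ⊆ ⋃ i, c i ∧ (∀ i, ediam (c i) ≤ δ) ∧ Fintype.card ι * δ ^ d ≤ C

theorem ediam_prod_le {X Y : Type*} [PseudoEMetricSpace X] [PseudoEMetricSpace Y]
    (s : Set X) (t : Set Y) : ediam (s ×ˢ t) ≤ max (ediam s) (ediam t) :=
  ediam_le fun p hp q hq => (Prod.edist_eq p q).trans_le <|
    max_le_max (edist_le_ediam_of_mem hp.1 hq.1) (edist_le_ediam_of_mem hp.2 hq.2)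

theorem LipschitzWith.prodMap {X X' Y Y' : Type*} [PseudoEMetricSpace X] [PseudoEMetricSpace X']
    [PseudoEMetricSpace Y] [PseudoEMetricSpace Y'] {Kf Kg : ℝ≥0} {f : X → X'} {g : Y → Y'}
    (hf : LipschitzWith Kf f) (hg : LipschitzWith Kg g) :
    LipschitzWith (max Kf Kg) (Prod.map f g) := by
  simpa [Prod.map_def] using
    (hf.comp LipschitzWith.prod_fst).prodMk (hg.comp LipschitzWith.prod_snd)

theorem exists_nat_le_floor_mem_Icc {a b x δ : ℝ} (hδ : 0 < δ) (hx : x ∈ Icc a b) :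
    ∃ k : ℕ, k ≤ ⌊(b - a) / δ⌋₊ ∧ x ∈ Icc (a + k * δ) (a + (k + 1) * δ) := by
  have hxa : 0 ≤ (x - a) / δ := div_nonneg (sub_nonneg.2 hx.1) hδ.le
  refine ⟨⌊(x - a) / δ⌋₊, Nat.floor_le_floor (by gcongr; exact hx.2), ?_, ?_⟩
  · have := (le_div_iff₀ hδ).1 (Nat.floor_le hxa)
    linarith
  · have := (div_lt_iff₀ hδ).1 (Nat.lt_floor_add_one ((x - a) / δ))
    linarith

theorem coveringNumberBounded_closedBall (m : ℕ) (R : ℝ≥0) :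
    CoveringNumberBounded m (closedBall (0 : Fin m → ℝ) R) := by
  refine ⟨(2 * R + 1) ^ m, fun δ hδ hδ_one => ?_⟩
  have hδ_top : δ ≠ ∞ := ne_top_of_le_ne_top ENNReal.one_ne_top hδ_one
  set a := δ.toReal
  have ha : 0 < a := ENNReal.toReal_pos hδ.ne' hδ_top
  have ha_one : a ≤ 1 := by simpa using ENNReal.toReal_mono ENNReal.one_ne_top hδ_one
  have hRR : (R : ℝ) - -R = 2 * R := by ring
  set K := ⌊2 * (R : ℝ) / a⌋₊ + 1
  refine ⟨Fin m → Fin K, inferInstance,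
    fun k => pi univ fun i => Icc (-R + k i * a) (-R + (k i + 1) * a), fun x hx => ?_,
    fun k => ediam_pi_le_of_le fun i => ?_, ?_⟩
  · have hxi (i : Fin m) : x i ∈ Icc (-(R : ℝ)) R := by
      rw [mem_closedBall_zero_iff] at hx
      exact abs_le.1 ((Real.norm_eq_abs _).symm.trans_le ((norm_le_pi_norm x i).trans hx))
    choose k hkK hk using fun i => exists_nat_le_floor_mem_Icc ha (hxi i)
    rw [hRR] at hkK
    exact mem_iUnion.2 ⟨fun i => ⟨k i, Nat.lt_succ_of_le (hkK i)⟩, fun i _ => hk i⟩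
  · rw [Real.ediam_Icc, show -(R : ℝ) + (k i + 1) * a - (-R + k i * a) = a by ring,
      ENNReal.ofReal_toReal hδ_top]
  · have hKa : (K : ℝ) * a ≤ 2 * R + 1 := by
      have := (le_div_iff₀ ha).1 (Nat.floor_le (by positivity : 0 ≤ 2 * (R : ℝ) / a))
      push_cast [K]
      nlinarith
    have hKδ : (K : ℝ≥0∞) * δ ≤ ((2 * R + 1 : ℝ≥0) : ℝ≥0∞) := by
      rw [← ENNReal.ofReal_toReal hδ_top, ← ENNReal.ofReal_natCast, ← ENNReal.ofReal_mul
        (Nat.cast_nonneg _), ← ENNReal.ofReal_coe_nnreal]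
      exact ENNReal.ofReal_le_ofReal (by push_cast; exact hKa)
    rw [Fintype.card_fun, Fintype.card_fin, Fintype.card_fin, ENNReal.rpow_natCast, Nat.cast_pow,
      ← mul_pow, ENNReal.coe_pow]
    exact pow_le_pow_left₀ zero_le hKδ m

section HausdorffMeasure

variable {X : Type*} [EMetricSpace X] [MeasurableSpace X] [BorelSpace X] {d : ℝ} {s : Set X}

theorem exists_cover_tsum_lt_of_hausdorffMeasure_eq_zero (hd : 0 < d) (hs : μH[d] s = 0)
    {r ε : ℝ≥0∞} (hr : 0 < r) (hε : 0 < ε) :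
    ∃ t : ℕ → Set X, s ⊆ ⋃ n, t n ∧ (∀ n, ediam (t n) ≤ r) ∧ ∑' n, ediam (t n) ^ d < ε := by
  rw [Measure.hausdorffMeasure_apply] at hs
  have hlt : (⨅ (t : ℕ → Set X) (_ : s ⊆ ⋃ n, t n) (_ : ∀ n, ediam (t n) ≤ r),
      ∑' n, ⨆ _ : (t n).Nonempty, ediam (t n) ^ d) < ε :=
    (le_iSup₂ (f := fun r (_ : 0 < r) => ⨅ (t : ℕ → Set X) (_ : s ⊆ ⋃ n, t n)
      (_ : ∀ n, ediam (t n) ≤ r), ∑' n, ⨆ _ : (t n).Nonempty, ediam (t n) ^ d) r hr).trans_lt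
      (hs.symm ▸ hε)
  simp only [iInf_lt_iff] at hlt
  obtain ⟨t, hst, htr, hlt⟩ := hlt
  refine ⟨t, hst, htr, (le_of_eq (tsum_congr fun n => ?_)).trans_lt hlt⟩
  rcases (t n).eq_empty_or_nonempty with hn | hn
  · simp [hn, ENNReal.zero_rpow_of_pos hd]
  · rw [iSup_pos hn]

/-- Unlike the diameters, the radii `δ n` are positive, so that a set with bounded covering
numbers can be covered at scale `δ n` by finitely many sets. -/
theorem exists_cover_pos_radii_of_hausdorffMeasure_eq_zero (hd : 0 < d) (hs : μH[d] s = 0)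
    {r ε : ℝ≥0∞} (hr : 0 < r) (hε : 0 < ε) :
    ∃ (t : ℕ → Set X) (δ : ℕ → ℝ≥0∞), s ⊆ ⋃ n, t n ∧ (∀ n, ediam (t n) ≤ δ n) ∧
      (∀ n, 0 < δ n ∧ δ n ≤ r) ∧ ∑' n, δ n ^ d ≤ ε := by
  obtain ⟨t, hst, htr, ht_sum⟩ :=
    exists_cover_tsum_lt_of_hausdorffMeasure_eq_zero hd hs hr (ENNReal.half_pos hε.ne')
  obtain ⟨η, hη_pos, hη_sum⟩ := ENNReal.exists_pos_sum_of_countable (ENNReal.half_pos hε.ne').ne' ℕ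
  refine ⟨t, fun n => min r (max (ediam (t n)) ((η n : ℝ≥0∞) ^ d⁻¹)), hst,
    fun n => le_min (htr n) (le_max_left _ _), fun n => ⟨lt_min hr (lt_max_of_lt_right
      (ENNReal.rpow_pos (ENNReal.coe_pos.2 (hη_pos n)) ENNReal.coe_ne_top)), min_le_left _ _⟩, ?_⟩
  have hδ (n : ℕ) :
      min r (max (ediam (t n)) ((η n : ℝ≥0∞) ^ d⁻¹)) ^ d ≤ ediam (t n) ^ d + η n := by
    calc _ ≤ max (ediam (t n)) ((η n : ℝ≥0∞) ^ d⁻¹) ^ d :=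
          ENNReal.rpow_le_rpow (min_le_right _ _) hd.le
      _ = max (ediam (t n) ^ d) (η n) := by
          rw [(ENNReal.monotone_rpow_of_nonneg hd.le).map_max, ENNReal.rpow_inv_rpow hd.ne']
      _ ≤ ediam (t n) ^ d + η n := max_le le_self_add le_add_self
  calc _ ≤ ∑' n, (ediam (t n) ^ d + η n) := ENNReal.tsum_le_tsum hδ
    _ = ∑' n, ediam (t n) ^ d + ∑' n, (η n : ℝ≥0∞) := ENNReal.tsum_add
    _ ≤ ε / 2 + ε / 2 := add_le_add ht_sum.le hη_sum.le
    _ = ε := ENNReal.add_halves ε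

theorem hausdorffMeasure_eq_zero_of_forall_cover
    (h : ∀ r : ℝ≥0∞, 0 < r → ∀ ε : ℝ≥0∞, 0 < ε → ∃ (ι : Type) (_ : Countable ι)
      (t : ι → Set X), s ⊆ ⋃ i, t i ∧ (∀ i, ediam (t i) ≤ r) ∧ ∑' i, ediam (t i) ^ d ≤ ε) :
    μH[d] s = 0 := by
  have hpos (n : ℕ) : 0 < (n : ℝ≥0∞)⁻¹ := ENNReal.inv_pos.2 (ENNReal.natCast_ne_top n)
  choose ι _ t hst ht_diam ht_sum using fun n : ℕ => h _ (hpos n) _ (hpos n)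
  refine le_antisymm ?_ zero_le
  calc μH[d] s ≤ liminf (fun n => ∑' i, ediam (t n i) ^ d) atTop :=
        Measure.hausdorffMeasure_le_liminf_tsum d s _ ENNReal.tendsto_inv_nat_nhds_zero t
          (.of_forall ht_diam) (.of_forall hst)
    _ ≤ liminf (fun n : ℕ => (n : ℝ≥0∞)⁻¹) atTop := liminf_le_liminf (.of_forall ht_sum)
    _ = 0 := ENNReal.tendsto_inv_nat_nhds_zero.liminf_eq

theorem LipschitzWith.hausdorffMeasure_image_eq_zero {Y : Type*} [EMetricSpace Y]
    [MeasurableSpace Y] [BorelSpace Y] {K : ℝ≥0} {f : X → Y} (hf : LipschitzWith K f)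
    (hd : 0 ≤ d) (hs : μH[d] s = 0) : μH[d] (f '' s) = 0 :=
  le_antisymm ((hf.hausdorffMeasure_image_le hd s).trans_eq (by rw [hs, mul_zero])) zero_le

end HausdorffMeasure

section Product

variable {X Y : Type*} [EMetricSpace X] [EMetricSpace Y] [MeasurableSpace Y] [BorelSpace Y]
  [MeasurableSpace (X × Y)] [BorelSpace (X × Y)] {s t : ℝ}

theorem CoveringNumberBounded.hausdorffMeasure_prod_eq_zero {S : Set X} {U : Set Y}
    (hS : CoveringNumberBounded s S) (hs : 0 ≤ s) (ht : 0 ≤ t) (hU : μH[t] U = 0) :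
    μH[s + t] (S ×ˢ U) = 0 := by
  rcases ht.eq_or_lt with rfl | ht
  · obtain rfl : U = ∅ := by
      by_contra hne
      have := Measure.one_le_hausdorffMeasure_zero_of_nonempty (nonempty_iff_ne_empty.2 hne)
      simp [hU] at this
    simp
  obtain ⟨C, hC⟩ := hS
  refine hausdorffMeasure_eq_zero_of_forall_cover fun r hr ε hε => ?_
  obtain ⟨v, δ, hUv, hvδ, hδ, hδ_sum⟩ := exists_cover_pos_radii_of_hausdorffMeasure_eq_zero ht hU
    (lt_min hr one_pos) (ENNReal.div_pos hε.ne' ENNReal.coe_ne_top)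
  have hδ_top (n : ℕ) : δ n ≠ ∞ :=
    ne_top_of_le_ne_top ENNReal.one_ne_top ((hδ n).2.trans (min_le_right _ _))
  choose ι _ c hSc hc_diam hN using fun n => hC (δ n) (hδ n).1 ((hδ n).2.trans (min_le_right _ _))
  have hdiam (n : ℕ) (i : ι n) : ediam (c n i ×ˢ v n) ≤ δ n :=
    (ediam_prod_le _ _).trans (max_le (hc_diam n i) (hvδ n))
  refine ⟨Σ n, ι n, inferInstance, fun p => c p.1 p.2 ×ˢ v p.1, ?_,
    fun p => (hdiam p.1 p.2).trans ((hδ p.1).2.trans (min_le_left _ _)), ?_⟩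
  · rintro ⟨x, y⟩ ⟨hx, hy⟩
    obtain ⟨n, hn⟩ := mem_iUnion.1 (hUv hy)
    obtain ⟨i, hi⟩ := mem_iUnion.1 (hSc n hx)
    exact mem_iUnion.2 ⟨⟨n, i⟩, hi, hn⟩
  calc ∑' p : Σ n, ι n, ediam (c p.1 p.2 ×ˢ v p.1) ^ (s + t)
      = ∑' n, ∑' i, ediam (c n i ×ˢ v n) ^ (s + t) := ENNReal.tsum_sigma' _
    _ ≤ ∑' n, ∑' _ : ι n, δ n ^ (s + t) :=
        ENNReal.tsum_le_tsum fun n => ENNReal.tsum_le_tsum fun i =>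
          ENNReal.rpow_le_rpow (hdiam n i) (by positivity)
    _ = ∑' n, Fintype.card (ι n) * δ n ^ s * δ n ^ t := by
        refine tsum_congr fun n => ?_
        rw [tsum_fintype, Finset.sum_const, Finset.card_univ, nsmul_eq_mul,
          ENNReal.rpow_add _ _ (hδ n).1.ne' (hδ_top n), mul_assoc]
    _ ≤ ∑' n, C * δ n ^ t := ENNReal.tsum_le_tsum fun n => mul_le_mul_left (hN n) _
    _ = C * ∑' n, δ n ^ t := ENNReal.tsum_mul_left
    _ ≤ C * (ε / C) := by gcongr
    _ ≤ ε := ENNReal.mul_div_le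

theorem hausdorffMeasure_euclideanSpace_prod_univ_eq_zero (m : ℕ) (ht : 0 ≤ t)
    (hY : μH[t] (univ : Set Y) = 0) :
    μH[m + t] (univ : Set (EuclideanSpace ℝ (Fin m) × Y)) = 0 := by
  have hcubes : μH[m + t] (univ : Set ((Fin m → ℝ) × Y)) = 0 := by
    rw [← univ_prod_univ, ← iUnion_closedBall_nat (0 : Fin m → ℝ), iUnion_prod_const]
    exact measure_iUnion_null fun n => by
      simpa using (coveringNumberBounded_closedBall m n).hausdorffMeasure_prod_eq_zero
        (Nat.cast_nonneg m) ht hY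
  have hsurj : Surjective (Prod.map (WithLp.toLp 2) id : (Fin m → ℝ) × Y → _) :=
    (WithLp.toLp_surjective 2).prodMap surjective_id
  rw [← hsurj.range_eq, ← image_univ]
  exact ((PiLp.lipschitzWith_toLp 2 _).prodMap LipschitzWith.id).hausdorffMeasure_image_eq_zero
    (by positivity) hcubes

end Product

theorem CountablyRectifiable.hausdorffMeasure_univ_prod_eq_zero {m : ℕ} {A Y : Type*}
    [MetricSpace A] [EMetricSpace Y] [MeasurableSpace Y] [BorelSpace Y]
    [MeasurableSpace (A × Y)] [BorelSpace (A × Y)] {t : ℝ}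
    (hA : CountablyRectifiable m (univ : Set A)) (ht : 0 ≤ t) (hY : μH[t] (univ : Set Y) = 0) :
    μH[m + t] (univ : Set (A × Y)) = 0 := by
  obtain ⟨S, f, K, hf, hA⟩ := hA
  have hd : (0 : ℝ) ≤ m + t := by positivity
  rw [← univ_prod_univ, hA, iUnion_prod_const]
  refine measure_iUnion_null fun i => ?_
  have hS : μH[m + t] (univ : Set (S i × Y)) = 0 := by
    rw [← (isometry_subtype_coe.prodMap isometry_id).hausdorffMeasure_image (Or.inl hd)]
    exact measure_mono_null (subset_univ _)
      (hausdorffMeasure_euclideanSpace_prod_univ_eq_zero m ht hY)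
  rw [← range_id, ← range_prodMap, ← image_univ]
  exact ((hf i).prodMap LipschitzWith.id).hausdorffMeasure_image_eq_zero hd hS

/-- **Negligibility and product.** If `A` is a countably `m`-rectifiable metric space and
`B` is an `m'`-negligible metric space, then `A × B` (with the sup product metric) is
`(m + m')`-negligible. -/
theorem product_negligible (m m' : ℕ) (A B : Type*) [MetricSpace A] [MetricSpace B]
    (hA : CountablyRectifiable m (Set.univ : Set A))
    (hB : IsNegligibleSpace B m') :
    IsNegligibleSpace (A × B) (m + m') := by
  let : MeasurableSpace B := borel B
  have : BorelSpace B := ⟨rfl⟩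
  let : MeasurableSpace (A × B) := borel (A × B)
  have : BorelSpace (A × B) := ⟨rfl⟩
  exact hA.hausdorffMeasure_univ_prod_eq_zero (Nat.cast_nonneg m') hB
end

section
/- Let ℓ ∈ ℕ, ℓ ≥ 1, and let E ⊆ ℝ^ℓ be a set of ℓ-dimensional Lebesgue (outer) measure zero. Then there exists a unit vector v₀ ∈ ℝ^ℓ such that the set {t ∈ ℝ : t·v₀ ∈ E} has one-dimensional Lebesgue measure zero. -/
open Set MeasureTheory

/-! By Fubini on `ℝ × E`, the set `{(t, v) | t • v ∈ N}` is null: for each `t ≠ 0` its slice is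
the dilate `t⁻¹ • N`, which is again null. Hence almost every `v` spans a line meeting `N` in a
null set; such a `v` can be taken nonzero, and rescaling it to unit length only dilates that set. -/

theorem volume_setOf_smul_smul_mem_eq_zero {E : Type*} [AddCommGroup E] [Module ℝ E]
    {N : Set E} {v : E} (hv : volume {t : ℝ | t • v ∈ N} = 0) {c : ℝ} (hc : c ≠ 0) :
    volume {t : ℝ | t • c • v ∈ N} = 0 := by
  have : {t : ℝ | t • c • v ∈ N} = (c • ·) ⁻¹' {t : ℝ | t • v ∈ N} := by
    ext t
    simp only [mem_ofPred_eq, mem_preimage, smul_smul, smul_eq_mul, mul_comm]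
  rw [this, Measure.addHaar_preimage_smul volume hc, hv, mul_zero]

theorem ae_volume_setOf_smul_mem_eq_zero {E : Type*} [NormedAddCommGroup E] [NormedSpace ℝ E]
    [MeasurableSpace E] [BorelSpace E] [FiniteDimensional ℝ E] {μ : Measure E}
    [μ.IsAddHaarMeasure] {N : Set E} (hN : μ N = 0) :
    ∀ᵐ v ∂μ, volume {t : ℝ | t • v ∈ N} = 0 := by
  obtain ⟨F, hNF, hF, hF0⟩ := exists_measurable_superset_of_null hN
  have h_slices : ∀ᵐ t : ℝ, ∀ᵐ v ∂μ, t • v ∉ F := by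
    filter_upwards [volume.ae_ne 0] with t ht
    have : μ ((t • ·) ⁻¹' F) = 0 := by rw [Measure.addHaar_preimage_smul μ ht, hF0, mul_zero]
    exact measure_eq_zero_iff_ae_notMem.mp this
  have h_lines : ∀ᵐ v ∂μ, ∀ᵐ t : ℝ, t • v ∉ F :=
    (Measure.ae_ae_comm ((measurable_fst.smul measurable_snd) hF).compl).mp h_slices
  filter_upwards [h_lines] with v hv
  exact measure_mono_null (fun t ht => hNF ht) (measure_eq_zero_iff_ae_notMem.mpr hv)

theorem Filter.Eventually.exists_ne_of_ae {α : Type*} [MeasurableSpace α] {μ : Measure α}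
    [NeZero μ] [NullSingletonClass μ] {p : α → Prop} (h : ∀ᵐ x ∂μ, p x) (a : α) :
    ∃ x ≠ a, p x :=
  ((μ.ae_ne a).and h).exists

/-- **Almost every ray misses a Lebesgue-null set.** If `E ⊆ ℝ^ℓ` has `ℓ`-dimensional
Lebesgue (outer) measure zero, then there is a unit vector `v₀` such that
`{t ∈ ℝ : t • v₀ ∈ E}` has one-dimensional Lebesgue measure zero. -/
theorem exists_unit_vector_line_null (ℓ : ℕ) (hl : 1 ≤ ℓ)
    (E : Set (EuclideanSpace ℝ (Fin ℓ))) (hE : volume E = 0) :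
    ∃ v₀ : EuclideanSpace ℝ (Fin ℓ), ‖v₀‖ = 1 ∧
      volume {t : ℝ | t • v₀ ∈ E} = 0 := by
  have : NeZero ℓ := ⟨by omega⟩
  obtain ⟨v, hv0, hv⟩ := (ae_volume_setOf_smul_mem_eq_zero hE).exists_ne_of_ae 0
  exact ⟨‖v‖⁻¹ • v, norm_smul_inv_norm hv0,
    volume_setOf_smul_smul_mem_eq_zero hv (inv_ne_zero (norm_ne_zero_iff.mpr hv0))⟩
end
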